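/- arXiv:2006.15352 — 2 statements merged into one kernel-verified Lean document; each statement's English description precedes it below -/
import Mathlib

section
/- For all complex ξ₁, ξ₂, p, q, η with Re(ξ₁) > 0, Re(ξ₂) > 0, Re(p) > 0, Re(q) > 0 and Re(η) > -1, the extended beta function satisfies the summation formula B_η^{p,q}(ξ₁,ξ₂) = Σ_{l=0}^∞ B_η^{p,q}(ξ₁+l, ξ₂+1). -/
open MeasureTheory Complex

/-- The Bessel–Struve kernel function, defined by its power series. -/
noncomputable def besselStruve (η t : ℂ) : ℂ :=
  (Complex.Gamma (η + 1) / (Real.sqrt Real.pi : ℂ)) *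
    ∑' m : ℕ, t ^ m * Complex.Gamma (((m : ℂ) + 1) / 2) /
      ((m.factorial : ℂ) * Complex.Gamma ((m : ℂ) / 2 + η + 1))

/-- The extended beta function `B_η^{p,q}(ξ₁, ξ₂)`. -/
noncomputable def extBeta (η p q ξ₁ ξ₂ : ℂ) : ℂ :=
  ∫ y in (0:ℝ)..1, (y : ℂ) ^ (ξ₁ - 1) * ((1 : ℂ) - (y : ℂ)) ^ (ξ₂ - 1) *
    besselStruve η (-p / (y : ℂ)) * besselStruve η (-q / (1 - (y : ℂ)))

/-- The Pochhammer symbol `(a)_l = Γ(a + l)/Γ(a)`. -/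
noncomputable def poch (a : ℂ) (l : ℕ) : ℂ := Complex.Gamma (a + l) / Complex.Gamma a

/-- The extended Gauss hypergeometric function `F_η^{p,q}(ξ₁, ξ₂; ξ₃; x)`. -/
noncomputable def extF (η p q ξ₁ ξ₂ ξ₃ x : ℂ) : ℂ :=
  ∑' l : ℕ, poch ξ₁ l * extBeta η p q (ξ₂ + l) (ξ₃ - ξ₂) * x ^ l /
    (Complex.betaIntegral ξ₂ (ξ₃ - ξ₂) * (l.factorial : ℂ))

/-- The extended confluent hypergeometric function `Φ_η^{p,q}(ξ₂; ξ₃; x)`. -/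
noncomputable def extPhi (η p q ξ₂ ξ₃ x : ℂ) : ℂ :=
  ∑' l : ℕ, extBeta η p q (ξ₂ + l) (ξ₃ - ξ₂) * x ^ l /
    (Complex.betaIntegral ξ₂ (ξ₃ - ξ₂) * (l.factorial : ℂ))

/-!
Since `(1 - y) ∑ₗ yˡ = 1` on `(0, 1)`, the formula is the termwise integration of the expansion
`y^(ξ₁-1) (1-y)^(ξ₂-1) = ∑ₗ y^(ξ₁+l-1) (1-y)^ξ₂`; by dominated convergence this is legitimate
as soon as the integrand of `B_η^{p,q}(ξ₁, ξ₂)` is integrable, i.e. as soon as `S_η(-p/y)` stays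
bounded for `y > 0`. Writing each coefficient `Γ((m+1)/2) / Γ(m/2+η+1)` of the series as a beta
integral and summing under the integral sign gives
`S_η(z) = Γ(η+1) / (√π Γ(η+3/2)) ∫₀¹ x^(-1/2) (1-x)^(η+1/2) e^(z√x) (z√x/2 + η + 1) dx`,
and on a sector `|z| ≤ R (-Re z)` the factor `|z| √x e^(Re z √x)` is at most `R`.
-/

open Set
open scoped Nat Interval

section Series

variable {𝕂 : Type*} [RCLike 𝕂]

theorem hasSum_pow_div_factorial_mul_natCast (x : 𝕂) :
    HasSum (fun n : ℕ => x ^ n / n ! * n) (x * NormedSpace.exp x) := by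
  have h : HasSum (fun n : ℕ => x ^ (n + 1) / (n + 1)! * ((n + 1 : ℕ) : 𝕂))
      (x * NormedSpace.exp x) := by
    have e : (fun n : ℕ => x ^ (n + 1) / (n + 1)! * ((n + 1 : ℕ) : 𝕂)) =
        fun n => x * (x ^ n / n !) := by
      ext n
      rw [Nat.factorial_succ, Nat.cast_mul, pow_succ]
      field_simp
    rw [e]
    exact (NormedSpace.expSeries_div_hasSum_exp x).mul_left x
  simpa using (hasSum_nat_add_iff (f := fun n : ℕ => x ^ n / n ! * n) 1).mp h

theorem hasSum_pow_div_factorial_mul_half_add (x c : 𝕂) :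
    HasSum (fun n : ℕ => x ^ n / n ! * (n / 2 + c))
      (NormedSpace.exp x * (x / 2 + c)) := by
  convert ((hasSum_pow_div_factorial_mul_natCast x).div_const 2).add
    ((NormedSpace.expSeries_div_hasSum_exp x).mul_right c) using 1
  · ext n; ring
  · ring

end Series

theorem hasSum_pow_mul_one_sub_mul {K : Type*} [NormedField K] [CompleteSpace K] {y : K}
    (hy : ‖y‖ < 1) (a : K) : HasSum (fun n : ℕ => y ^ n * (1 - y) * a) a := by
  have hy1 : 1 - y ≠ 0 := sub_ne_zero.mpr fun h => by simp [← h] at hy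
  simpa [mul_assoc, inv_mul_cancel_left₀ hy1] using
    (hasSum_geometric_of_norm_lt_one hy).mul_right ((1 - y) * a)

theorem Complex.Gamma_div_Gamma_eq_mul_betaIntegral {u v : ℂ} (hu : 0 < u.re) (hv : 0 < v.re)
    (huv : 0 < (u + v - 1).re) :
    Gamma u / Gamma (u + v - 1) = (u + v - 1) / Gamma v * betaIntegral u v := by
  have hs : u + v - 1 ≠ 0 := fun h => by simp [h] at huv
  have hΓs := Gamma_ne_zero_of_re_pos huv
  have hΓv := Gamma_ne_zero_of_re_pos hv
  have hΓ : Gamma u * Gamma v = (u + v - 1) * Gamma (u + v - 1) * betaIntegral u v := by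
    rw [Gamma_mul_Gamma_eq_betaIntegral hu hv, ← Gamma_add_one _ hs, sub_add_cancel]
  field_simp
  linear_combination hΓ

-- The integrand of `B(1/2, η + 3/2)`; the more obvious `B(1/2, η + 1/2)` would only converge for
-- `Re η > -1/2`.
noncomputable def struveWeight (η : ℂ) (x : ℝ) : ℂ :=
  (x : ℂ) ^ ((1 / 2 : ℂ) - 1) * (1 - (x : ℂ)) ^ (η + 3 / 2 - 1)

noncomputable def struveKernel (η z : ℂ) (x : ℝ) : ℂ :=
  exp (z * √x) * (z * √x / 2 + (η + 1))

section BesselStruve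

variable {η : ℂ}

lemma re_add_three_halves_pos (hη : -1 < η.re) : 0 < (η + 3 / 2).re := by
  norm_num; linarith

lemma intervalIntegrable_struveWeight (hη : -1 < η.re) :
    IntervalIntegrable (struveWeight η) volume 0 1 :=
  betaIntegral_convergent (by norm_num) (re_add_three_halves_pos hη)

lemma ofReal_cpow_succ_div_two_sub_one {x : ℝ} (hx : 0 < x) (m : ℕ) :
    (x : ℂ) ^ (((m : ℂ) + 1) / 2 - 1) = (√x : ℂ) ^ m * (x : ℂ) ^ ((1 / 2 : ℂ) - 1) := by
  have hsqrt : (x : ℂ) ^ (1 / 2 : ℂ) = √x := by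
    rw [Real.sqrt_eq_rpow, Complex.ofReal_cpow hx.le]; norm_num
  rw [show ((m : ℂ) + 1) / 2 - 1 = m * (1 / 2 : ℂ) + (1 / 2 - 1) by ring,
    cpow_add _ _ (ofReal_ne_zero.mpr hx.ne'), cpow_nat_mul, hsqrt]

lemma intervalIntegral_sqrt_pow_mul_struveWeight (m : ℕ) :
    ∫ x in (0 : ℝ)..1, (√x : ℂ) ^ m * struveWeight η x =
      betaIntegral (((m : ℂ) + 1) / 2) (η + 3 / 2) := by
  refine intervalIntegral.integral_congr_ae ?_
  filter_upwards with x hx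
  rw [uIoc_of_le zero_le_one] at hx
  rw [struveWeight, ← mul_assoc, ← ofReal_cpow_succ_div_two_sub_one hx.1]

lemma Gamma_div_Gamma_eq_mul_betaIntegral_three_halves (hη : -1 < η.re) (m : ℕ) :
    Gamma (((m : ℂ) + 1) / 2) / Gamma ((m : ℂ) / 2 + η + 1) =
      ((m : ℂ) / 2 + (η + 1)) / Gamma (η + 3 / 2) *
        betaIntegral (((m : ℂ) + 1) / 2) (η + 3 / 2) := by
  have hsum : ((m : ℂ) + 1) / 2 + (η + 3 / 2) - 1 = (m : ℂ) / 2 + η + 1 := by ring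
  have hm0 : (0 : ℝ) ≤ m := m.cast_nonneg
  have hpos : 0 < ((m : ℂ) / 2 + η + 1).re := by norm_num; linarith
  have hm : 0 < (((m : ℂ) + 1) / 2).re := by norm_num; linarith
  have := Gamma_div_Gamma_eq_mul_betaIntegral hm (re_add_three_halves_pos hη) (hsum ▸ hpos)
  rw [hsum] at this
  rw [this, add_assoc]

lemma norm_struveSeries_term_le (z : ℂ) (m : ℕ) {x : ℝ} (hx : x ∈ Ioc (0 : ℝ) 1) :
    ‖struveWeight η x * ((z * √x) ^ m / m ! * (m / 2 + (η + 1)))‖ ≤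
      ‖struveWeight η x‖ * (‖z‖ ^ m / m ! * (m / 2 + ‖η + 1‖)) := by
  have hsqrt : ‖z‖ * √x ≤ ‖z‖ := mul_le_of_le_one_right (norm_nonneg z) (Real.sqrt_le_one.mpr hx.2)
  have hc : ‖(m : ℂ) / 2 + (η + 1)‖ ≤ m / 2 + ‖η + 1‖ := by
    simpa using norm_add_le ((m : ℂ) / 2) (η + 1)
  rw [norm_mul, norm_mul, norm_div, norm_pow, norm_mul, Complex.norm_real, Complex.norm_natCast,
    Real.norm_of_nonneg (Real.sqrt_nonneg x)]
  gcongr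

theorem hasSum_besselStruve_series (hη : -1 < η.re) (z : ℂ) :
    HasSum (fun m : ℕ => z ^ m * Gamma (((m : ℂ) + 1) / 2) /
        ((m ! : ℂ) * Gamma ((m : ℂ) / 2 + η + 1)))
      ((Gamma (η + 3 / 2))⁻¹ * ∫ x in (0 : ℝ)..1, struveWeight η x * struveKernel η z x) := by
  have hw := intervalIntegrable_struveWeight hη
  have hF := intervalIntegral.hasSum_integral_of_dominated_convergence
    (F := fun (m : ℕ) (x : ℝ) => struveWeight η x * ((z * √x) ^ m / m ! * (m / 2 + (η + 1))))
    (f := fun x => struveWeight η x * struveKernel η z x)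
    (fun m x => ‖struveWeight η x‖ * (‖z‖ ^ m / m ! * (m / 2 + ‖η + 1‖)))
    (fun m => hw.def'.aestronglyMeasurable.mul (by fun_prop : Continuous _).aestronglyMeasurable)
    (fun m => ae_of_all _ fun x hx => norm_struveSeries_term_le z m <| by
      rwa [uIoc_of_le zero_le_one] at hx)
    (ae_of_all _ fun x _ =>
      (hasSum_pow_div_factorial_mul_half_add ‖z‖ ‖η + 1‖).summable.mul_left _)
    (by
      simp_rw [tsum_mul_left]
      exact hw.norm.mul_const _)
    (ae_of_all _ fun x _ => by
      simpa [struveKernel, ← Complex.exp_eq_exp_ℂ] using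
        (hasSum_pow_div_factorial_mul_half_add (z * √x) (η + 1)).mul_left (struveWeight η x))
  refine (hF.mul_left (Gamma (η + 3 / 2))⁻¹).congr_fun fun m => ?_
  have hint : ∫ x in (0 : ℝ)..1, struveWeight η x * ((z * √x) ^ m / m ! * (m / 2 + (η + 1))) =
      z ^ m / m ! * (m / 2 + (η + 1)) * betaIntegral (((m : ℂ) + 1) / 2) (η + 3 / 2) := by
    rw [← intervalIntegral_sqrt_pow_mul_struveWeight, ← intervalIntegral.integral_const_mul]
    congr 1 with x
    ring
  rw [hint, show z ^ m * Gamma (((m : ℂ) + 1) / 2) / ((m ! : ℂ) * Gamma ((m : ℂ) / 2 + η + 1)) =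
    z ^ m / m ! * (Gamma (((m : ℂ) + 1) / 2) / Gamma ((m : ℂ) / 2 + η + 1)) by ring,
    Gamma_div_Gamma_eq_mul_betaIntegral_three_halves hη]
  ring

theorem besselStruve_eq_integral (hη : -1 < η.re) (z : ℂ) :
    besselStruve η z = Gamma (η + 1) / (√Real.pi * Gamma (η + 3 / 2)) *
      ∫ x in (0 : ℝ)..1, struveWeight η x * struveKernel η z x := by
  rw [besselStruve, (hasSum_besselStruve_series hη z).tsum_eq]
  ring

theorem measurable_besselStruve (hη : -1 < η.re) : Measurable (besselStruve η) := by
  refine Measurable.const_mul ?_ _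
  refine measurable_of_tendsto_metrizable (fun n => ?_)
    (tendsto_pi_nhds.mpr fun z => (hasSum_besselStruve_series hη z).summable.hasSum.tendsto_sum_nat)
  fun_prop

lemma norm_exp_mul_half_add_le {u c : ℂ} {R : ℝ} (hR : 0 ≤ R) (hu : ‖u‖ ≤ R * -u.re) :
    ‖exp u * (u / 2 + c)‖ ≤ R / 2 + ‖c‖ := by
  have hre : u.re ≤ 0 := by nlinarith [norm_nonneg u, Complex.re_le_norm u]
  have hexp : Real.exp u.re ≤ 1 := Real.exp_le_one_iff.mpr hre
  have hdecay : ‖u‖ * Real.exp u.re ≤ R := by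
    have := Real.mul_exp_neg_le_exp_neg_one (-u.re)
    rw [neg_neg] at this
    calc ‖u‖ * Real.exp u.re ≤ R * (-u.re * Real.exp u.re) := by
          nlinarith [Real.exp_pos u.re]
      _ ≤ R * 1 := by gcongr; exact this.trans (Real.exp_le_one_iff.mpr (by norm_num))
      _ = R := mul_one R
  calc ‖exp u * (u / 2 + c)‖ ≤ Real.exp u.re * (‖u‖ / 2 + ‖c‖) := by
        rw [norm_mul, Complex.norm_exp]
        gcongr
        exact (norm_add_le _ _).trans (by simp)
    _ = ‖u‖ * Real.exp u.re / 2 + Real.exp u.re * ‖c‖ := by ring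
    _ ≤ R / 2 + 1 * ‖c‖ := by gcongr
    _ = R / 2 + ‖c‖ := by rw [one_mul]

theorem exists_norm_besselStruve_le (hη : -1 < η.re) {R : ℝ} (hR : 0 ≤ R) :
    ∃ C, ∀ z : ℂ, ‖z‖ ≤ R * -z.re → ‖besselStruve η z‖ ≤ C := by
  refine ⟨‖Gamma (η + 1) / (√Real.pi * Gamma (η + 3 / 2))‖ *
    ∫ x in (0 : ℝ)..1, ‖struveWeight η x‖ * (R / 2 + ‖η + 1‖), fun z hz => ?_⟩
  rw [besselStruve_eq_integral hη, norm_mul]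
  gcongr
  refine intervalIntegral.norm_integral_le_of_norm_le zero_le_one (ae_of_all _ fun x hx => ?_)
    ((intervalIntegrable_struveWeight hη).norm.mul_const _)
  rw [norm_mul, struveKernel]
  gcongr
  refine norm_exp_mul_half_add_le hR ?_
  have hx : 0 ≤ √x := Real.sqrt_nonneg x
  rw [norm_mul, Complex.norm_real, Real.norm_of_nonneg hx, Complex.re_mul_ofReal]
  nlinarith

theorem exists_norm_besselStruve_neg_div_le (hη : -1 < η.re) {p : ℂ} (hp : 0 < p.re) :
    ∃ C, ∀ y : ℝ, 0 < y → ‖besselStruve η (-p / y)‖ ≤ C := by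
  obtain ⟨C, hC⟩ := exists_norm_besselStruve_le hη (R := ‖p‖ / p.re) (by positivity)
  refine ⟨C, fun y hy => hC _ (le_of_eq ?_)⟩
  rw [norm_div, norm_neg, Complex.norm_real, Real.norm_of_nonneg hy.le, Complex.div_ofReal_re,
    neg_re]
  field_simp

end BesselStruve

lemma ae_mem_Ioo_of_mem_uIoc {a b : ℝ} (hab : a ≤ b) : ∀ᵐ y : ℝ, y ∈ Ι a b → y ∈ Ioo a b := by
  filter_upwards [volume.ae_ne b] with y hyb hy
  rw [uIoc_of_le hab] at hy
  exact ⟨hy.1, lt_of_le_of_ne hy.2 hyb⟩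

theorem hasSum_intervalIntegral_pow_mul_one_sub_mul {F : ℝ → ℂ}
    (hF : IntervalIntegrable F volume 0 1) :
    HasSum (fun n : ℕ => ∫ y in (0 : ℝ)..1, (y : ℂ) ^ n * (1 - y) * F y)
      (∫ y in (0 : ℝ)..1, F y) := by
  have hnorm : ∀ y ∈ Ioo (0 : ℝ) 1, ‖y‖ < 1 := fun y hy => by
    rw [Real.norm_of_nonneg hy.1.le]; exact hy.2
  have hsum : ∀ y ∈ Ioo (0 : ℝ) 1,
      HasSum (fun n : ℕ => y ^ n * (1 - y) * ‖F y‖) ‖F y‖ := fun y hy =>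
    hasSum_pow_mul_one_sub_mul (hnorm y hy) _
  refine intervalIntegral.hasSum_integral_of_dominated_convergence
    (fun n y => y ^ n * (1 - y) * ‖F y‖)
    (fun n => (by fun_prop : Continuous fun y : ℝ => (y : ℂ) ^ n * (1 - y)).aestronglyMeasurable.mul
      hF.def'.aestronglyMeasurable) (fun n => ?_) ?_ ?_ ?_
  · filter_upwards [ae_mem_Ioo_of_mem_uIoc zero_le_one] with y hy hy'
    obtain ⟨hy0, hy1⟩ := hy hy'
    rw [norm_mul, norm_mul, norm_pow, Complex.norm_real, Real.norm_of_nonneg hy0.le,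
      show (1 : ℂ) - y = ((1 - y : ℝ) : ℂ) by push_cast; ring, Complex.norm_real,
      Real.norm_of_nonneg (by linarith)]
  · filter_upwards [ae_mem_Ioo_of_mem_uIoc zero_le_one] with y hy hy'
    exact (hsum y (hy hy')).summable
  · refine hF.norm.congr_uIoo fun y hy => ?_
    rw [uIoo_of_le zero_le_one] at hy
    exact (hsum y hy).tsum_eq.symm
  · filter_upwards [ae_mem_Ioo_of_mem_uIoc zero_le_one] with y hy hy'
    refine hasSum_pow_mul_one_sub_mul ?_ (F y)
    rw [Complex.norm_real]
    exact hnorm y (hy hy')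

theorem intervalIntegrable_cpow_mul_cpow_mul_of_bdd {a b : ℂ} (ha : 0 < a.re) (hb : 0 < b.re)
    {g : ℝ → ℂ} {C : ℝ} (hg : AEStronglyMeasurable g) (hC : ∀ y ∈ Ioo (0 : ℝ) 1, ‖g y‖ ≤ C) :
    IntervalIntegrable (fun y : ℝ => (y : ℂ) ^ (a - 1) * (1 - (y : ℂ)) ^ (b - 1) * g y)
      volume 0 1 := by
  refine intervalIntegrable_iff.mpr <|
    (betaIntegral_convergent ha hb).def'.mul_bdd (c := C) hg.restrict ?_
  rw [ae_restrict_iff' measurableSet_uIoc]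
  filter_upwards [ae_mem_Ioo_of_mem_uIoc zero_le_one] with y hy hy'
  exact hC y (hy hy')

lemma ofReal_cpow_mul_cpow_add_nat_add_one {y : ℝ} (hy : y ∈ Ioo (0 : ℝ) 1) (a b : ℂ) (n : ℕ) :
    (y : ℂ) ^ (a + n - 1) * (1 - (y : ℂ)) ^ (b + 1 - 1) =
      (y : ℂ) ^ n * (1 - y) * ((y : ℂ) ^ (a - 1) * (1 - (y : ℂ)) ^ (b - 1)) := by
  have hy0 : (y : ℂ) ≠ 0 := ofReal_ne_zero.mpr hy.1.ne'
  have hy1 : 1 - (y : ℂ) ≠ 0 := by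
    rw [← ofReal_one, ← ofReal_sub, ofReal_ne_zero]; linarith [hy.2]
  rw [add_sub_right_comm, cpow_add _ _ hy0, cpow_natCast, add_sub_cancel_right]
  conv_lhs => rw [← sub_add_cancel b 1, cpow_add _ _ hy1, cpow_one]
  ring

theorem extBeta_summation (ξ₁ ξ₂ p q η : ℂ)
    (h1 : 0 < ξ₁.re) (h2 : 0 < ξ₂.re) (hp : 0 < p.re) (hq : 0 < q.re) (hη : -1 < η.re) :
    extBeta η p q ξ₁ ξ₂ = ∑' l : ℕ, extBeta η p q (ξ₁ + l) (ξ₂ + 1) := by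
  obtain ⟨C₁, hC₁⟩ := exists_norm_besselStruve_neg_div_le hη hp
  obtain ⟨C₂, hC₂⟩ := exists_norm_besselStruve_neg_div_le hη hq
  have hS := measurable_besselStruve hη
  have hF : IntervalIntegrable (fun y : ℝ => (y : ℂ) ^ (ξ₁ - 1) * (1 - (y : ℂ)) ^ (ξ₂ - 1) *
      besselStruve η (-p / y) * besselStruve η (-q / (1 - y))) volume 0 1 := by
    have hB : ∀ y ∈ Ioo (0 : ℝ) 1, ‖besselStruve η (-q / (1 - y))‖ ≤ C₂ := fun y hy => by
      simpa using hC₂ (1 - y) (by linarith [hy.2])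
    simpa only [mul_assoc] using intervalIntegrable_cpow_mul_cpow_mul_of_bdd h1 h2
      (by fun_prop) fun y hy => (norm_mul_le _ _).trans <|
        mul_le_mul (hC₁ y hy.1) (hB y hy) (norm_nonneg _) ((norm_nonneg _).trans (hC₁ y hy.1))
  rw [extBeta, ← (hasSum_intervalIntegral_pow_mul_one_sub_mul hF).tsum_eq]
  refine tsum_congr fun l => intervalIntegral.integral_congr_Ioo_of_le zero_le_one fun y hy => ?_
  simp only [ofReal_cpow_mul_cpow_add_nat_add_one hy]
  ring
end

section
/- For all k ∈ ℕ and all complex ξ₂, ξ₃, p, q, η with Re(ξ₃) > Re(ξ₂) > 0, Re(p) > 0, Re(q) > 0 and Re(η) > -1, the k-th derivative with respect to x of the extended confluent hypergeometric function satisfies d^k/dx^k [Φ_η^{p,q}(ξ₂;ξ₃;x)] = ((ξ₂)_k / (ξ₃)_k) · Φ_η^{p,q}(ξ₂+k; ξ₃+k; x), where (a)_k denotes the Pochhammer symbol. -/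
open MeasureTheory Complex

/-!
Write `Φ(x) = ∑ c_l x^l` with `c_l = B_η^{p,q}(ξ₂ + l, ξ₃ - ξ₂) / (B(ξ₂, ξ₃ - ξ₂) l!)`. The extended
beta values are bounded in `l`, since the integrands decrease in `l` on `(0, 1]`, so `Φ` is entire
and may be differentiated termwise. The recurrence `B(ξ₂ + 1, ξ₃ - ξ₂) = (ξ₂ / ξ₃) B(ξ₂, ξ₃ - ξ₂)`
turns the differentiated series into `(ξ₂ / ξ₃) Φ(ξ₂ + 1; ξ₃ + 1; x)`; iterating, the factors
`(ξ₂ + i) / (ξ₃ + i)` multiply to `(ξ₂)_k / (ξ₃)_k`.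
-/

theorem hasDerivAt_tsum_mul_pow_of_norm_le_div_factorial {𝕜 : Type*} [RCLike 𝕜] {A : ℕ → 𝕜} {C : ℝ}
    (hA : ∀ l, ‖A l‖ ≤ C / l.factorial) (x : 𝕜) :
    HasDerivAt (fun z => ∑' l, A l * z ^ l) (∑' l : ℕ, ((l : 𝕜) + 1) * A (l + 1) * x ^ l) x := by
  set R := ‖x‖ + 1
  have hR : 1 ≤ R := le_add_of_nonneg_left (norm_nonneg x)
  have hxR : x ∈ Metric.ball (0 : 𝕜) R := by simp [R]
  -- as `n ≤ 2 ^ n`, this dominates the series and its termwise derivative on the ball of radius `R`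
  set u : ℕ → ℝ := fun n => C * ((2 * R) ^ n / n.factorial)
  have hu : Summable u := (Real.summable_pow_div_factorial (2 * R)).mul_left C
  have hbound : ∀ n (y : 𝕜), ‖y‖ ≤ R → ‖A n * (n * y ^ (n - 1))‖ ≤ u n := by
    intro n y hy
    have hpow : (n : ℝ) * ‖y‖ ^ (n - 1) ≤ (2 * R) ^ n := calc
      (n : ℝ) * ‖y‖ ^ (n - 1) ≤ 2 ^ n * R ^ n := by
        gcongr
        · exact_mod_cast Nat.lt_two_pow_self.le
        · exact (pow_le_pow_left₀ (norm_nonneg y) hy _).trans (pow_le_pow_right₀ hR (n.sub_le 1))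
      _ = (2 * R) ^ n := (mul_pow 2 R n).symm
    calc ‖A n * (n * y ^ (n - 1))‖ = ‖A n‖ * ((n : ℝ) * ‖y‖ ^ (n - 1)) := by
          simp only [norm_mul, norm_pow, RCLike.norm_natCast]
      _ ≤ C / n.factorial * (2 * R) ^ n := by
          gcongr
          exacts [(norm_nonneg _).trans (hA n), hA n]
      _ = u n := by simp only [u]; ring
  have hsum : Summable fun n => A n * x ^ n := by
    refine .of_norm_bounded hu fun n => ?_
    calc ‖A n * x ^ n‖ = ‖A n‖ * ‖x‖ ^ n := by rw [norm_mul, norm_pow]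
      _ ≤ C / n.factorial * (2 * R) ^ n := by
          gcongr
          exacts [(norm_nonneg _).trans (hA n), hA n, by linarith [norm_nonneg x]]
      _ = u n := by simp only [u]; ring
  have hder := hasDerivAt_tsum_of_isPreconnected hu Metric.isOpen_ball
    (convex_ball (0 : 𝕜) R).isPreconnected
    (fun n y _ => (hasDerivAt_pow n y).const_mul (A n))
    (fun n y hy => hbound n y (mem_ball_zero_iff.mp hy).le) hxR hsum hxR
  have hsum' : Summable fun n => A n * (n * x ^ (n - 1)) :=
    .of_norm_bounded hu fun n => hbound n x (mem_ball_zero_iff.mp hxR).le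
  have hshift : ∑' n, A n * (n * x ^ (n - 1)) = ∑' l : ℕ, ((l : 𝕜) + 1) * A (l + 1) * x ^ l := by
    rw [hsum'.tsum_eq_zero_add, Nat.cast_zero, zero_mul, mul_zero, zero_add]
    exact tsum_congr fun n => by rw [Nat.add_sub_cancel]; push_cast; ring
  rwa [hshift] at hder

theorem exists_forall_norm_intervalIntegral_le_of_antitone {E : Type*} [NormedAddCommGroup E]
    [NormedSpace ℝ E] {g : ℕ → ℝ → E} {a b : ℝ}
    (hg : ∀ l m, l ≤ m → ∀ y ∈ Set.uIoc a b, ‖g m y‖ ≤ ‖g l y‖) :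
    ∃ C, ∀ l, ‖∫ y in a..b, g l y‖ ≤ C := by
  classical
  by_cases h : ∃ l, IntervalIntegrable (g l) volume a b
  · refine ⟨|∫ y in a..b, ‖g (Nat.find h) y‖|, fun l => ?_⟩
    rcases lt_or_ge l (Nat.find h) with hl | hl
    · -- below the first integrable index the integral is the junk value `0`
      rw [intervalIntegral.integral_undef (Nat.find_min h hl), norm_zero]
      exact abs_nonneg _
    · exact intervalIntegral.norm_integral_le_abs_of_norm_le
        ((ae_restrict_mem measurableSet_uIoc).mono fun y hy => hg _ _ hl y hy)
        (Nat.find_spec h).norm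
  · exact ⟨0, fun l => by rw [intervalIntegral.integral_undef fun hl => h ⟨l, hl⟩, norm_zero]⟩

theorem exists_forall_norm_extBeta_add_natCast_le (η p q a b : ℂ) :
    ∃ C, ∀ l : ℕ, ‖extBeta η p q (a + l) b‖ ≤ C := by
  refine exists_forall_norm_intervalIntegral_le_of_antitone fun l m hlm y hy => ?_
  rw [Set.uIoc_of_le zero_le_one] at hy
  simp only [norm_mul, norm_cpow_eq_rpow_re_of_pos hy.1]
  gcongr ?_ * _ * _ * _
  refine Real.rpow_le_rpow_of_exponent_ge hy.1 hy.2 ?_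
  simpa using (Nat.cast_le.mpr hlm : (l : ℝ) ≤ m)

theorem Complex.betaIntegral_add_one_left {a c : ℂ} (ha : 0 < a.re) (hc : 0 < c.re) :
    betaIntegral (a + 1) c = a / (a + c) * betaIntegral a c := by
  have hac : 0 < (a + c).re := by rw [add_re]; positivity
  have ha0 : a ≠ 0 := by rintro rfl; simp at ha
  have hac0 : a + c ≠ 0 := by intro h; simp [h] at hac
  have hΓ : Gamma (a + c) ≠ 0 := Gamma_ne_zero_of_re_pos hac
  have h := Gamma_mul_Gamma_eq_betaIntegral (s := a + 1) (t := c)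
    (by rw [add_re, one_re]; linarith) hc
  rw [Gamma_add_one a ha0, mul_assoc, Gamma_mul_Gamma_eq_betaIntegral ha hc,
    show a + 1 + c = a + c + 1 by ring, Gamma_add_one _ hac0] at h
  rw [div_mul_eq_mul_div, eq_div_iff hac0]
  apply mul_left_cancel₀ hΓ
  linear_combination -h

theorem poch_zero {a : ℂ} (ha : Gamma a ≠ 0) : poch a 0 = 1 := by
  simp [poch, ha]

theorem poch_succ (a : ℂ) (k : ℕ) : poch a (k + 1) = a * poch (a + 1) k := by
  rcases eq_or_ne a 0 with rfl | ha
  · simp [poch, Gamma_zero]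
  · rw [poch, poch, Gamma_add_one a ha, mul_div_assoc', mul_div_mul_left _ _ ha, Nat.cast_succ,
      add_right_comm, add_assoc]

noncomputable def extPhiCoeff (η p q ξ₂ ξ₃ : ℂ) (l : ℕ) : ℂ :=
  extBeta η p q (ξ₂ + l) (ξ₃ - ξ₂) / (betaIntegral ξ₂ (ξ₃ - ξ₂) * l.factorial)

theorem extPhi_eq_tsum (η p q ξ₂ ξ₃ x : ℂ) :
    extPhi η p q ξ₂ ξ₃ x = ∑' l, extPhiCoeff η p q ξ₂ ξ₃ l * x ^ l :=
  tsum_congr fun _ => (div_mul_eq_mul_div _ _ _).symm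

theorem exists_forall_norm_extPhiCoeff_le (η p q ξ₂ ξ₃ : ℂ) :
    ∃ C, ∀ l, ‖extPhiCoeff η p q ξ₂ ξ₃ l‖ ≤ C / l.factorial := by
  obtain ⟨C, hC⟩ := exists_forall_norm_extBeta_add_natCast_le η p q ξ₂ (ξ₃ - ξ₂)
  refine ⟨C / ‖betaIntegral ξ₂ (ξ₃ - ξ₂)‖, fun l => ?_⟩
  rw [extPhiCoeff, norm_div, norm_mul, Complex.norm_natCast, div_div]
  exact div_le_div_of_nonneg_right (hC l) (by positivity)

theorem succ_mul_extPhiCoeff_succ (η p q : ℂ) {ξ₂ ξ₃ : ℂ} (h1 : 0 < ξ₂.re) (h2 : ξ₂.re < ξ₃.re)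
    (l : ℕ) :
    ((l : ℂ) + 1) * extPhiCoeff η p q ξ₂ ξ₃ (l + 1) =
      ξ₂ / ξ₃ * extPhiCoeff η p q (ξ₂ + 1) (ξ₃ + 1) l := by
  have hB := betaIntegral_add_one_left h1 (by rw [sub_re]; linarith : 0 < (ξ₃ - ξ₂).re)
  rw [add_sub_cancel] at hB
  have hξ₂ : ξ₂ ≠ 0 := by rintro rfl; simp at h1
  have hξ₃ : ξ₃ ≠ 0 := by rintro rfl; simp at h1 h2; linarith
  simp only [extPhiCoeff, show ξ₃ + 1 - (ξ₂ + 1) = ξ₃ - ξ₂ by ring,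
    show ξ₂ + 1 + (l : ℂ) = ξ₂ + ↑(l + 1) by push_cast; ring, hB, Nat.factorial_succ,
    Nat.cast_mul, Nat.cast_succ]
  field_simp

theorem hasDerivAt_extPhi (η p q : ℂ) {ξ₂ ξ₃ : ℂ} (h1 : 0 < ξ₂.re) (h2 : ξ₂.re < ξ₃.re)
    (x : ℂ) :
    HasDerivAt (extPhi η p q ξ₂ ξ₃) (ξ₂ / ξ₃ * extPhi η p q (ξ₂ + 1) (ξ₃ + 1) x) x := by
  obtain ⟨C, hC⟩ := exists_forall_norm_extPhiCoeff_le η p q ξ₂ ξ₃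
  have h := hasDerivAt_tsum_mul_pow_of_norm_le_div_factorial hC x
  rw [show (fun z => ∑' l, extPhiCoeff η p q ξ₂ ξ₃ l * z ^ l) = extPhi η p q ξ₂ ξ₃ from
    funext fun z => (extPhi_eq_tsum ..).symm] at h
  refine h.congr_deriv ?_
  rw [extPhi_eq_tsum, ← tsum_mul_left]
  exact tsum_congr fun l => by rw [succ_mul_extPhiCoeff_succ η p q h1 h2]; ring

theorem extPhi_iteratedDeriv_general (k : ℕ) (ξ₂ ξ₃ p q η : ℂ)
    (h1 : 0 < ξ₂.re) (h2 : ξ₂.re < ξ₃.re) :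
    ∀ x : ℂ,
      iteratedDeriv k (fun x => extPhi η p q ξ₂ ξ₃ x) x =
        (poch ξ₂ k / poch ξ₃ k) * extPhi η p q (ξ₂ + k) (ξ₃ + k) x := by
  induction k generalizing ξ₂ ξ₃ with
  | zero =>
    intro x
    rw [iteratedDeriv_zero, Nat.cast_zero, poch_zero (Gamma_ne_zero_of_re_pos h1),
      poch_zero (Gamma_ne_zero_of_re_pos (h1.trans h2)), div_one, one_mul, add_zero, add_zero]
  | succ k ih =>
    intro x
    have h1' : 0 < (ξ₂ + 1).re := by rw [add_re, one_re]; linarith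
    have h2' : (ξ₂ + 1).re < (ξ₃ + 1).re := by simpa using h2
    rw [iteratedDeriv_succ', funext fun y => (hasDerivAt_extPhi η p q h1 h2 y).deriv,
      iteratedDeriv_const_mul_field, ih _ _ h1' h2', poch_succ ξ₂, poch_succ ξ₃,
      show ξ₂ + ((k + 1 : ℕ) : ℂ) = ξ₂ + 1 + k by push_cast; ring,
      show ξ₃ + ((k + 1 : ℕ) : ℂ) = ξ₃ + 1 + k by push_cast; ring]
    ring

theorem extPhi_iteratedDeriv (k : ℕ) (ξ₂ ξ₃ p q η : ℂ)
    (h1 : 0 < ξ₂.re) (h2 : ξ₂.re < ξ₃.re) (hp : 0 < p.re) (hq : 0 < q.re)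
    (hη : -1 < η.re) :
    ∀ x : ℂ,
      iteratedDeriv k (fun x => extPhi η p q ξ₂ ξ₃ x) x =
        (poch ξ₂ k / poch ξ₃ k) * extPhi η p q (ξ₂ + k) (ξ₃ + k) x :=
  extPhi_iteratedDeriv_general k ξ₂ ξ₃ p q η h1 h2
end
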